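/- Let M be a natural number, let A be an M×M complex matrix, let m, n : {1,…,M} → ℕ satisfy Σ_{i=1}^M m_i = Σ_{j=1}^M n_j = T, and let r, c : {1,…,T} → {1,…,M} be functions such that for every i the fiber r^{-1}(i) has exactly m_i elements and for every j the fiber c^{-1}(j) has exactly n_j elements. Then Σ_{σ ∈ S_T} ∏_{t=1}^T A_{r(t), c(σ(t))} = (∏_{j=1}^M n_j!) · [coefficient of the monomial ∏_{j=1}^M x_j^{n_j} in the polynomial ∏_{i=1}^M (Σ_{j=1}^M A_{ij}·x_j)^{m_i} ∈ ℂ[x_1,…,x_M]]. -/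

import Mathlib

open Finset MvPolynomial

private theorem prod_monomial' {α σ R : Type*} [CommSemiring R] (s : Finset α)
    (d : α → (σ →₀ ℕ)) (a : α → R) :
    (∏ t ∈ s, monomial (d t) (a t)) = monomial (∑ t ∈ s, d t) (∏ t ∈ s, a t) := by
  classical
  induction s using Finset.cons_induction with
  | empty => simp
  | cons x s hx ih => rw [prod_cons, prod_cons, sum_cons, ih, monomial_mul]

private theorem sum_single_eq_fiberCard {M T : ℕ} (f : Fin T → Fin M) :
    (∑ t : Fin T, Finsupp.single (f t) 1) =
      Finsupp.equivFunOnFinite.symm fun j => (univ.filter fun t => f t = j).card := by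
  ext j
  rw [Finsupp.finset_sum_apply]
  simp only [Finsupp.single_apply, Finsupp.coe_equivFunOnFinite_symm]
  rw [Finset.card_filter]

private theorem coeff_prod_linear {M T : ℕ} (B : Fin T → Fin M → ℂ) (μ : Fin M →₀ ℕ) :
    MvPolynomial.coeff μ (∏ t : Fin T, (∑ j : Fin M, C (B t j) * X j)) =
      ∑ f : Fin T → Fin M,
        (if (Finsupp.equivFunOnFinite.symm fun j => (univ.filter fun t => f t = j).card) = μ
          then ∏ t, B t (f t) else 0) := by
  have h1 : ∀ t : Fin T, (∑ j : Fin M, C (B t j) * X j)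
      = ∑ j ∈ univ, monomial (Finsupp.single j 1) (B t j) := by
    intro t
    refine Finset.sum_congr rfl fun j _ => ?_
    rw [X, C_mul_monomial, mul_one]
  simp_rw [h1]
  rw [Finset.prod_univ_sum, ← Fintype.piFinset_univ, MvPolynomial.coeff_sum]
  refine Finset.sum_congr rfl fun f _ => ?_
  rw [prod_monomial', coeff_monomial, sum_single_eq_fiberCard]

/-- The permutations intertwining `f` and `c` are equivalent to families of fiber bijections. -/
private def permCompEquiv {T : ℕ} {β : Type*} [DecidableEq β] (c f : Fin T → β) :
    {σ : Equiv.Perm (Fin T) // ∀ t, c (σ t) = f t} ≃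
    (∀ j : β, {t // f t = j} ≃ {t // c t = j}) where
  toFun σ := fun j => σ.1.subtypeEquiv (fun t => by rw [σ.2 t])
  invFun e := ⟨Equiv.ofFiberEquiv e, fun t => Equiv.ofFiberEquiv_map e t⟩
  left_inv σ := by
    apply Subtype.ext
    apply Equiv.ext
    intro t
    rfl
  right_inv e := by
    funext j
    apply Equiv.ext
    rintro ⟨t, rfl⟩
    rfl

private theorem card_perm_comp {T : ℕ} {β : Type*} [Fintype β] [DecidableEq β] (c f : Fin T → β)
    (h : ∀ j, (univ.filter fun t => f t = j).card = (univ.filter fun t => c t = j).card) :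
    Fintype.card {σ : Equiv.Perm (Fin T) // ∀ t, c (σ t) = f t} =
      ∏ j, ((univ.filter fun t => c t = j).card).factorial := by
  rw [Fintype.card_congr (permCompEquiv c f), Fintype.card_pi]
  refine Finset.prod_congr rfl fun j _ => ?_
  have e : {t // f t = j} ≃ {t // c t = j} := by
    apply Fintype.equivOfCardEq
    rw [Fintype.card_subtype, Fintype.card_subtype]
    exact h j
  rw [Fintype.card_equiv e, Fintype.card_subtype, h j]

/-- The permanent of the `T×T` matrix obtained from `A` by repeating
row `i` exactly `m i` times and column `j` exactly `n j` times equals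
`(∏_j n_j!)` times the coefficient of `∏_j x_j^{n_j}` in `∏_i (∑_j A i j x_j)^{m i}`. -/
theorem permanent_repeated_rows_columns_eq_coeff
    (M T : ℕ) (A : Matrix (Fin M) (Fin M) ℂ) (m n : Fin M → ℕ)
    (hm : ∑ i, m i = T) (hn : ∑ j, n j = T)
    (r c : Fin T → Fin M)
    (hr : ∀ i, (Finset.univ.filter fun t => r t = i).card = m i)
    (hc : ∀ j, (Finset.univ.filter fun t => c t = j).card = n j) :
    (∑ σ : Equiv.Perm (Fin T), ∏ t : Fin T, A (r t) (c (σ t))) =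
      (∏ j : Fin M, ((n j).factorial : ℂ)) *
        MvPolynomial.coeff (Finsupp.equivFunOnFinite.symm n)
          (∏ i : Fin M, (∑ j : Fin M, MvPolynomial.C (A i j) * MvPolynomial.X j) ^ m i) := by
  classical
  -- Step A: rewrite the polynomial as a product over t
  have hA : (∏ i : Fin M, (∑ j : Fin M, C (A i j) * X j) ^ m i)
      = ∏ t : Fin T, (∑ j : Fin M, C (A (r t) j) * X j) := by
    rw [← Finset.prod_fiberwise univ r (fun t => ∑ j : Fin M, C (A (r t) j) * X j)]
    refine Finset.prod_congr rfl fun i _ => ?_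
    rw [Finset.prod_congr rfl (fun t ht => by rw [(Finset.mem_filter.mp ht).2]),
      Finset.prod_const, hr i]
  -- the condition on fibers of f
  have hcond : ∀ f : Fin T → Fin M,
      ((Finsupp.equivFunOnFinite.symm fun j => (univ.filter fun t => f t = j).card)
        = Finsupp.equivFunOnFinite.symm n)
      ↔ ∀ j, (univ.filter fun t => f t = j).card = n j := by
    intro f
    rw [Equiv.apply_eq_iff_eq, funext_iff]
  -- Step C: the coefficient
  have hC : MvPolynomial.coeff (Finsupp.equivFunOnFinite.symm n)
        (∏ i : Fin M, (∑ j : Fin M, C (A i j) * X j) ^ m i)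
      = ∑ f : Fin T → Fin M,
          (if (∀ j, (univ.filter fun t => f t = j).card = n j)
            then ∏ t, A (r t) (f t) else 0) := by
    rw [hA, coeff_prod_linear]
    exact Finset.sum_congr rfl fun f _ => by rw [if_congr (hcond f) rfl rfl]
  -- counting permutations over a fiber
  have hcount : ∀ f : Fin T → Fin M,
      (univ.filter fun σ : Equiv.Perm (Fin T) => c ∘ ⇑σ = f).card
        = if (∀ j, (univ.filter fun t => f t = j).card = n j)
            then ∏ j, (n j).factorial else 0 := by
    intro f
    have hfilt : (univ.filter fun σ : Equiv.Perm (Fin T) => c ∘ ⇑σ = f)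
        = univ.filter fun σ : Equiv.Perm (Fin T) => ∀ t, c (σ t) = f t := by
      refine Finset.filter_congr fun σ _ => ?_
      simp [funext_iff]
    split_ifs with h
    · rw [hfilt, ← Fintype.card_subtype, card_perm_comp c f (fun j => by rw [h j, hc j])]
      exact Finset.prod_congr rfl fun j _ => by rw [hc j]
    · rw [Finset.card_eq_zero, Finset.filter_eq_empty_iff]
      intro σ _
      intro hσ
      apply h
      intro j
      have : (univ.filter fun t => f t = j) = univ.filter fun t => c (σ t) = j := by
        refine Finset.filter_congr fun t _ => ?_
        rw [← hσ]
        rfl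
      rw [this, ← hc j, ← Fintype.card_subtype, ← Fintype.card_subtype]
      exact Fintype.card_congr (σ.subtypeEquiv fun t => Iff.rfl)
  -- Step L: group the permutation sum by f = c ∘ σ
  have hL : (∑ σ : Equiv.Perm (Fin T), ∏ t : Fin T, A (r t) (c (σ t)))
      = ∑ f : Fin T → Fin M,
          (((univ.filter fun σ : Equiv.Perm (Fin T) => c ∘ ⇑σ = f).card : ℂ)
            * ∏ t, A (r t) (f t)) := by
    rw [← Finset.sum_fiberwise univ (fun σ : Equiv.Perm (Fin T) => c ∘ ⇑σ)
      (fun σ => ∏ t : Fin T, A (r t) (c (σ t)))]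
    refine Finset.sum_congr rfl fun f _ => ?_
    rw [Finset.sum_congr rfl (fun σ hσ => Finset.prod_congr rfl fun t _ => by
      rw [show c (σ t) = f t from congrFun (Finset.mem_filter.mp hσ).2 t]),
      Finset.sum_const, nsmul_eq_mul]
  rw [hL, hC, Finset.mul_sum]
  refine Finset.sum_congr rfl fun f _ => ?_
  rw [hcount f]
  split_ifs with h
  · rw [Nat.cast_prod]
  · simp
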